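/- Let X, Y, Z be metric spaces, F : X ⇒ Y and G : Y ⇒ Z set-valued maps, and x̄, ȳ, z̄ with ȳ ∈ F(x̄), z̄ ∈ G(ȳ). Suppose F has the Aubin property around (x̄, ȳ) with constant l_F, G has the Aubin property around (ȳ, z̄) with constant l_G, and the pair (F, G) is locally composition-stable around (x̄, ȳ, z̄): for every ε > 0 there is δ > 0 such that for every x ∈ B(x̄, δ) and z ∈ (G∘F)(x) ∩ B(z̄, δ), there exists y ∈ F(x) ∩ B(ȳ, ε) with z ∈ G(y). Then G∘F has the Aubin property around (x̄, z̄), with lip(G∘F)(x̄, z̄) ≤ l_F · l_G (in particular, there exists δ > 0 such that for all x, u ∈ B(x̄, δ), e((G∘F)(x) ∩ B(z̄, δ), (G∘F)(u)) ≤ l_G l_F d(x, u)). -/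

import Mathlib

open Metric Set Filter Topology ENNReal

noncomputable def exc {α : Type*} [PseudoEMetricSpace α] (A B : Set α) : ℝ≥0∞ :=
  ⨆ a ∈ A, EMetric.infEdist a B

/-!
Take `z ∈ (G ∘ F) x` near `z₀`. Composition stability yields `y ∈ F x` near `y₀` with `z ∈ G y`;
the Aubin property of `F` gives points `y' ∈ F u` with `d(y, y')` close to `l_F d(x, u)`. These
`y'` stay in the neighbourhood of `y₀` where `G` is Aubin, so `d(z, G y') ≤ l_G d(y, y')`, and
letting `d(y, y')` decrease to `l_F d(x, u)` gives the bound.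
-/

theorem infEDist_le_exc {α : Type*} [PseudoEMetricSpace α] {A B : Set α} {a : α} (ha : a ∈ A) :
    infEDist a B ≤ exc A B :=
  le_iSup₂ (f := fun a (_ : a ∈ A) => infEDist a B) a ha

theorem infEDist_biUnion_le_of_infEDist_le {Y Z : Type*} [PseudoMetricSpace Y]
    [PseudoEMetricSpace Z] {S : Set Y} {G : Y → Set Z} {y : Y} {z : Z} {l r s : ℝ}
    (hl : 0 ≤ l) (hr : 0 ≤ r) (hrs : r < s) (hy : infEDist y S ≤ ENNReal.ofReal r)
    (hG : ∀ y' ∈ S, dist y y' < s → infEDist z (G y') ≤ ENNReal.ofReal (l * dist y y')) :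
    infEDist z (⋃ y' ∈ S, G y') ≤ ENNReal.ofReal (l * r) := by
  have hcont : Tendsto (fun t => ENNReal.ofReal (l * t)) (𝓝[>] r) (𝓝 (ENNReal.ofReal (l * r))) :=
    ((ENNReal.continuous_ofReal.comp (continuous_const_mul l)).tendsto r).mono_left
      nhdsWithin_le_nhds
  refine ge_of_tendsto hcont ?_
  filter_upwards [Ioo_mem_nhdsGT hrs] with t ⟨hrt, hts⟩
  have hlt : infEDist y S < ENNReal.ofReal t :=
    hy.trans_lt ((ENNReal.ofReal_lt_ofReal_iff (hr.trans_lt hrt)).2 hrt)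
  obtain ⟨y', hy'S, hyy'⟩ := infEDist_lt_iff.1 hlt
  rw [edist_lt_ofReal] at hyy'
  calc infEDist z (⋃ y' ∈ S, G y') ≤ infEDist z (G y') :=
        infEDist_anti (subset_biUnion_of_mem hy'S)
    _ ≤ ENNReal.ofReal (l * dist y y') := hG y' hy'S (hyy'.trans hts)
    _ ≤ ENNReal.ofReal (l * t) := by gcongr

theorem stmt10_general {X Y Z : Type*} [MetricSpace X] [MetricSpace Y] [MetricSpace Z]
    (F : X → Set Y) (G : Y → Set Z) (x₀ : X) (y₀ : Y) (z₀ : Z)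
    (lF lG : ℝ) (hlF : 0 < lF) (hlG : 0 < lG)
    (hAubF : ∃ U ∈ 𝓝 x₀, ∃ V ∈ 𝓝 y₀, ∀ x ∈ U, ∀ u ∈ U,
      exc (F x ∩ V) (F u) ≤ ENNReal.ofReal (lF * dist x u))
    (hAubG : ∃ U ∈ 𝓝 y₀, ∃ V ∈ 𝓝 z₀, ∀ y ∈ U, ∀ v ∈ U,
      exc (G y ∩ V) (G v) ≤ ENNReal.ofReal (lG * dist y v))
    (hstab : ∀ ε > (0:ℝ), ∃ δ > (0:ℝ), ∀ x ∈ Metric.ball x₀ δ,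
      ∀ z ∈ (⋃ y ∈ F x, G y) ∩ Metric.ball z₀ δ,
        ∃ y ∈ F x ∩ Metric.ball y₀ ε, z ∈ G y) :
    ∃ δ > (0:ℝ), ∀ x ∈ Metric.ball x₀ δ, ∀ u ∈ Metric.ball x₀ δ,
      exc ((⋃ y ∈ F x, G y) ∩ Metric.ball z₀ δ) (⋃ y ∈ F u, G y) ≤
        ENNReal.ofReal (lG * lF * dist x u) := by
  obtain ⟨UF, hUF, VF, hVF, HF⟩ := hAubF
  obtain ⟨UG, hUG, VG, hVG, HG⟩ := hAubG
  obtain ⟨ρ, hρ, hρVU⟩ := Metric.mem_nhds_iff.1 (inter_mem hVF hUG)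
  obtain ⟨δ₀, hδ₀, hstab⟩ := hstab (ρ / 2) (half_pos hρ)
  obtain ⟨rF, hrF, hrUF⟩ := Metric.mem_nhds_iff.1 hUF
  obtain ⟨rG, hrG, hrVG⟩ := Metric.mem_nhds_iff.1 hVG
  -- `δ ≤ ρ / (4 lF)` keeps the points of `F u` near `y ∈ F x` inside `ball y₀ ρ`
  set δ := min (min δ₀ (ρ / (4 * lF))) (min rF rG)
  have hδ : 0 < δ := by positivity
  refine ⟨δ, hδ, fun x hx u hu => iSup₂_le fun z ⟨hzGFx, hz⟩ => ?_⟩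
  have hmemUF {w : X} (hw : w ∈ ball x₀ δ) : w ∈ UF := hrUF (ball_subset_ball (by simp [δ]) hw)
  obtain ⟨y, ⟨hyFx, hy⟩, hzGy⟩ := hstab x (ball_subset_ball (by simp [δ]) hx) z
    ⟨hzGFx, ball_subset_ball (by simp [δ]) hz⟩
  have hyVU : y ∈ VF ∩ UG := hρVU (ball_subset_ball (half_le_self hρ.le) hy)
  have hyFu : infEDist y (F u) ≤ ENNReal.ofReal (lF * dist x u) :=
    (HF x (hmemUF hx) u (hmemUF hu)).trans' (infEDist_le_exc ⟨hyFx, hyVU.1⟩)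
  have hxu : lF * dist x u < ρ / 2 := by
    have hδρ : 4 * lF * δ ≤ ρ := (le_div_iff₀' (by positivity)).1 (by simp [δ])
    nlinarith [dist_triangle_right x u x₀, mem_ball.1 hx, mem_ball.1 hu]
  rw [mul_assoc]
  refine infEDist_biUnion_le_of_infEDist_le hlG.le (by positivity) hxu hyFu fun y' _ hyy' => ?_
  have hy'VU : y' ∈ VF ∩ UG := hρVU (by
    rw [mem_ball] at hy ⊢
    linarith [dist_triangle y' y y₀, dist_comm y y'])
  exact (HG y hyVU.2 y' hy'VU.2).trans'
    (infEDist_le_exc ⟨hzGy, hrVG (ball_subset_ball (by simp [δ]) hz)⟩)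

theorem stmt10 {X Y Z : Type*} [MetricSpace X] [MetricSpace Y] [MetricSpace Z]
    (F : X → Set Y) (G : Y → Set Z) (x₀ : X) (y₀ : Y) (z₀ : Z)
    (h1 : y₀ ∈ F x₀) (h2 : z₀ ∈ G y₀)
    (lF lG : ℝ) (hlF : 0 < lF) (hlG : 0 < lG)
    (hAubF : ∃ U ∈ 𝓝 x₀, ∃ V ∈ 𝓝 y₀, ∀ x ∈ U, ∀ u ∈ U,
      exc (F x ∩ V) (F u) ≤ ENNReal.ofReal (lF * dist x u))
    (hAubG : ∃ U ∈ 𝓝 y₀, ∃ V ∈ 𝓝 z₀, ∀ y ∈ U, ∀ v ∈ U,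
      exc (G y ∩ V) (G v) ≤ ENNReal.ofReal (lG * dist y v))
    (hstab : ∀ ε > (0:ℝ), ∃ δ > (0:ℝ), ∀ x ∈ Metric.ball x₀ δ,
      ∀ z ∈ (⋃ y ∈ F x, G y) ∩ Metric.ball z₀ δ,
        ∃ y ∈ F x ∩ Metric.ball y₀ ε, z ∈ G y) :
    ∃ δ > (0:ℝ), ∀ x ∈ Metric.ball x₀ δ, ∀ u ∈ Metric.ball x₀ δ,
      exc ((⋃ y ∈ F x, G y) ∩ Metric.ball z₀ δ) (⋃ y ∈ F u, G y) ≤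
        ENNReal.ofReal (lG * lF * dist x u) :=
  stmt10_general F G x₀ y₀ z₀ lF lG hlF hlG hAubF hAubG hstab
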